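/- Let (Aᵢ), (Bᵢ), (Cᵢ), (Dᵢ) be inverse sequences indexed by the natural numbers, where each Aᵢ is a group (with homomorphisms as bonding maps) and Bᵢ, Cᵢ, Dᵢ are pointed sets, together with level maps Bᵢ → Cᵢ → Dᵢ of pointed sets commuting with the bonding maps and actions of Aᵢ on Bᵢ compatible with the bonding maps (the bonding map applied to a·b equals the image of a acting on the image of b). Assume that for each i: (exactness at Bᵢ) the nonempty point-inverses of Bᵢ → Cᵢ are precisely the orbits of the Aᵢ-action, and (exactness at Cᵢ) the preimage of the basepoint under Cᵢ → Dᵢ equals the image of Bᵢ → Cᵢ. If (Aᵢ) and (Cᵢ) satisfy the Mittag-Leffler condition and (Dᵢ) satisfies the dual Mittag-Leffler condition, then (Bᵢ) satisfies the Mittag-Leffler condition. -/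

import Mathlib

/-!
Images at a level `i` are images of the images at any higher level, so it suffices to treat
levels `i` above the index `k₀` given by the dual Mittag-Leffler condition on `(Dᵢ)`. Choose
`n₁ > i` where the images of `(Aᵢ)` in `A_i` stabilize and `n₂ > n₁` where those of `(Cᵢ)` in
`C_{n₁}` stabilize; let `k > n₂` and `b ∈ B_{n₂}`. The image of `b` in `C_{n₁}` lifts to some
`c ∈ C_l` with `l` chosen by the dual condition for `k`. Since `v c` dies in `D_{n₁}`, hence in
`D_{k₀}`, it already dies in `D_k`, so the image of `c` in `C_k` comes from some `b₁ ∈ B_k`. The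
images of `b` and `b₁` in `C_{n₁}` agree, so their images in `B_{n₁}` differ by some `a ∈ A_{n₁}`;
the image of `a` in `A_i` comes from `A_k`, and translating `b₁` by that element gives a point of
`B_k` with the same image in `B_i` as `b`.
-/

/-- An inverse sequence of groups `⋯ → A₂ → A₁ → A₀`, presented by its compatible
composite bonding homomorphisms. -/
structure GroupInvSeq (A : ℕ → Type) [∀ i, Group (A i)] : Type where
  bond : ∀ ⦃i j : ℕ⦄, i ≤ j → (A j →* A i)
  bond_refl : ∀ i, bond (le_refl i) = MonoidHom.id (A i)
  bond_comp : ∀ ⦃i j k : ℕ⦄ (hij : i ≤ j) (hjk : j ≤ k),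
    (bond hij).comp (bond hjk) = bond (hij.trans hjk)

/-- The Mittag-Leffler condition for an inverse sequence of groups. -/
def GroupInvSeq.MittagLeffler {A : ℕ → Type} [∀ i, Group (A i)]
    (S : GroupInvSeq A) : Prop :=
  ∀ i, ∃ j, ∃ hij : i < j, ∀ k, ∀ hjk : j < k,
    Set.range (S.bond (hij.le.trans hjk.le)) = Set.range (S.bond hij.le)

/-- An inverse sequence of pointed sets `⋯ → X₂ → X₁ → X₀`, presented by its
compatible composite basepoint-preserving bonding maps. -/
structure PointedInvSeq (X : ℕ → Type) (pt : ∀ i, X i) : Type where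
  bond : ∀ ⦃i j : ℕ⦄, i ≤ j → X j → X i
  bond_refl : ∀ i (x : X i), bond (le_refl i) x = x
  bond_comp : ∀ ⦃i j k : ℕ⦄ (hij : i ≤ j) (hjk : j ≤ k) (x : X k),
    bond (hij.trans hjk) x = bond hij (bond hjk x)
  bond_pt : ∀ ⦃i j : ℕ⦄ (h : i ≤ j), bond h (pt j) = pt i

/-- The Mittag-Leffler condition for an inverse sequence of pointed sets. -/
def PointedInvSeq.MittagLeffler {X : ℕ → Type} {pt : ∀ i, X i}
    (S : PointedInvSeq X pt) : Prop :=
  ∀ i, ∃ j, ∃ hij : i < j, ∀ k, ∀ hjk : j < k,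
    Set.range (S.bond (hij.le.trans hjk.le)) = Set.range (S.bond hij.le)

/-- The dual Mittag-Leffler condition for an inverse sequence of pointed sets:
there is `k` such that for every `j > k` there is `i > j` for which the kernel
(preimage of the basepoint) of `X i → X k` equals the kernel of `X i → X j`. -/
def PointedInvSeq.DualMittagLeffler {X : ℕ → Type} {pt : ∀ i, X i}
    (S : PointedInvSeq X pt) : Prop :=
  ∃ k, ∀ j, ∀ hkj : k < j, ∃ i, ∃ hji : j < i,
    {x : X i | S.bond (hkj.le.trans hji.le) x = pt k} =
      {x : X i | S.bond hji.le x = pt j}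

namespace PointedInvSeq

variable {X : ℕ → Type} {pt : ∀ i, X i} (S : PointedInvSeq X pt)

theorem range_bond_trans {i j k : ℕ} (hij : i ≤ j) (hjk : j ≤ k) (hik : i ≤ k) :
    Set.range (S.bond hik) = S.bond hij '' Set.range (S.bond hjk) := by
  rw [← Set.range_comp]
  exact congrArg Set.range (funext (S.bond_comp hij hjk))

theorem range_bond_trans_subset {i j k : ℕ} (hij : i ≤ j) (hjk : j ≤ k) (hik : i ≤ k) :
    Set.range (S.bond hik) ⊆ Set.range (S.bond hij) := by
  rw [S.range_bond_trans hij hjk]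
  exact Set.image_subset_range _ _

theorem mittagLeffler_of_forall_gt (N : ℕ)
    (h : ∀ i, N < i → ∃ j, ∃ hij : i < j, ∀ k, ∀ hjk : j < k,
      Set.range (S.bond hij.le) ⊆ Set.range (S.bond (hij.le.trans hjk.le))) :
    S.MittagLeffler := by
  intro i
  obtain ⟨j, hi'j, hstable⟩ := h (max i N + 1) (by omega)
  have hii' : i ≤ max i N + 1 := by omega
  refine ⟨j, by omega, fun k hjk => ?_⟩
  refine (S.range_bond_trans_subset _ hjk.le _).antisymm ?_
  rw [S.range_bond_trans hii' hi'j.le, S.range_bond_trans hii' (hi'j.trans hjk).le]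
  exact Set.image_mono (hstable k hjk)

theorem bond_eq_pt_of_ker_subset {k₀ n k l : ℕ} (hk₀n : k₀ ≤ n) (hnl : n ≤ l)
    (hk₀l : k₀ ≤ l) (hkl : k ≤ l)
    (hker : {x : X l | S.bond hk₀l x = pt k₀} ⊆ {x : X l | S.bond hkl x = pt k})
    {x : X l} (hx : S.bond hnl x = pt n) : S.bond hkl x = pt k :=
  hker (show S.bond hk₀l x = pt k₀ by rw [S.bond_comp hk₀n hnl, hx, S.bond_pt])

end PointedInvSeq

theorem bond_act_mem_range_bond {A B : ℕ → Type} [∀ i, Group (A i)] {ptB : ∀ i, B i}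
    (SA : GroupInvSeq A) (SB : PointedInvSeq B ptB) (act : ∀ i, A i → B i → B i)
    (act_bond : ∀ ⦃i j : ℕ⦄ (h : i ≤ j) (a : A j) (b : B j),
      SB.bond h (act j a b) = act i (SA.bond h a) (SB.bond h b))
    {i n k : ℕ} (hin : i ≤ n) (hnk : n ≤ k)
    (hA : Set.range (SA.bond hin) ⊆ Set.range (SA.bond (hin.trans hnk))) (a : A n) (b : B k) :
    SB.bond hin (act n a (SB.bond hnk b)) ∈ Set.range (SB.bond (hin.trans hnk)) := by
  obtain ⟨a', ha'⟩ := hA ⟨a, rfl⟩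
  refine ⟨act k a' b, ?_⟩
  rw [act_bond, ha', act_bond, SB.bond_comp hin hnk]

theorem mittagLeffler_of_exact_sequence_general
    {A B C D : ℕ → Type} [∀ i, Group (A i)]
    {ptB : ∀ i, B i} {ptC : ∀ i, C i} {ptD : ∀ i, D i}
    (SA : GroupInvSeq A) (SB : PointedInvSeq B ptB)
    (SC : PointedInvSeq C ptC) (SD : PointedInvSeq D ptD)
    (act : ∀ i, A i → B i → B i)
    (act_bond : ∀ ⦃i j : ℕ⦄ (h : i ≤ j) (a : A j) (b : B j),
      SB.bond h (act j a b) = act i (SA.bond h a) (SB.bond h b))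
    (u : ∀ i, B i → C i) (v : ∀ i, C i → D i)
    (u_bond : ∀ ⦃i j : ℕ⦄ (h : i ≤ j) (b : B j), u i (SB.bond h b) = SC.bond h (u j b))
    (v_bond : ∀ ⦃i j : ℕ⦄ (h : i ≤ j) (c : C j), v i (SC.bond h c) = SD.bond h (v j c))
    (exactB : ∀ i (b b' : B i), u i b = u i b' ↔ ∃ a : A i, act i a b = b')
    (exactC : ∀ i (c : C i), v i c = ptD i ↔ ∃ b : B i, u i b = c)
    (hA : SA.MittagLeffler) (hC : SC.MittagLeffler) (hD : SD.DualMittagLeffler) :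
    SB.MittagLeffler := by
  obtain ⟨k₀, hk₀⟩ := hD
  refine SB.mittagLeffler_of_forall_gt k₀ fun i hk₀i => ?_
  obtain ⟨n₁, hin₁, hA₁⟩ := hA i
  obtain ⟨n₂, hn₁n₂, hC₂⟩ := hC n₁
  refine ⟨n₂, hin₁.trans hn₁n₂, fun k hn₂k => ?_⟩
  rintro _ ⟨b, rfl⟩
  obtain ⟨l, hkl, hker⟩ := hk₀ k (by omega)
  obtain ⟨c, hc⟩ : u n₁ (SB.bond hn₁n₂.le b) ∈
      Set.range (SC.bond (hn₁n₂.trans (hn₂k.trans hkl)).le) := by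
    rw [hC₂ l (hn₂k.trans hkl), u_bond]
    exact Set.mem_range_self _
  have hvc : v k (SC.bond hkl.le c) = ptD k := by
    rw [v_bond]
    refine SD.bond_eq_pt_of_ker_subset (hk₀i.trans hin₁).le (by omega) _ _ hker.le ?_
    rw [← v_bond, hc]
    exact (exactC _ _).2 ⟨_, rfl⟩
  obtain ⟨b₁, hb₁⟩ := (exactC k _).1 hvc
  obtain ⟨a, ha⟩ := (exactB n₁ (SB.bond (hn₁n₂.trans hn₂k).le b₁) (SB.bond hn₁n₂.le b)).1 <| by
    rw [u_bond, hb₁, ← SC.bond_comp, hc]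
  rw [SB.bond_comp hin₁.le hn₁n₂.le, ← ha]
  exact bond_act_mem_range_bond SA SB act act_bond _ _ (hA₁ k (hn₁n₂.trans hn₂k)).ge a b₁

/-- Dydak's lemma: given an exact sequence `Aᵢ → Bᵢ → Cᵢ → Dᵢ` of inverse sequences,
where the `Aᵢ` are groups acting on the pointed sets `Bᵢ` compatibly with the bonding
maps, exactness meaning that the nonempty point-inverses of `Bᵢ → Cᵢ` are precisely
the orbits of the `Aᵢ`-action and that the kernel of `Cᵢ → Dᵢ` is the image of
`Bᵢ → Cᵢ`: if `(Aᵢ)` and `(Cᵢ)` are Mittag-Leffler and `(Dᵢ)` is dual Mittag-Leffler,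
then `(Bᵢ)` is Mittag-Leffler. -/
theorem mittagLeffler_of_exact_sequence
    {A B C D : ℕ → Type} [∀ i, Group (A i)]
    {ptB : ∀ i, B i} {ptC : ∀ i, C i} {ptD : ∀ i, D i}
    (SA : GroupInvSeq A) (SB : PointedInvSeq B ptB)
    (SC : PointedInvSeq C ptC) (SD : PointedInvSeq D ptD)
    (act : ∀ i, A i → B i → B i)
    (act_one : ∀ i (b : B i), act i 1 b = b)
    (act_mul : ∀ i (a a' : A i) (b : B i), act i (a * a') b = act i a (act i a' b))
    (act_bond : ∀ ⦃i j : ℕ⦄ (h : i ≤ j) (a : A j) (b : B j),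
      SB.bond h (act j a b) = act i (SA.bond h a) (SB.bond h b))
    (u : ∀ i, B i → C i) (v : ∀ i, C i → D i)
    (u_pt : ∀ i, u i (ptB i) = ptC i) (v_pt : ∀ i, v i (ptC i) = ptD i)
    (u_bond : ∀ ⦃i j : ℕ⦄ (h : i ≤ j) (b : B j), u i (SB.bond h b) = SC.bond h (u j b))
    (v_bond : ∀ ⦃i j : ℕ⦄ (h : i ≤ j) (c : C j), v i (SC.bond h c) = SD.bond h (v j c))
    (exactB : ∀ i (b b' : B i), u i b = u i b' ↔ ∃ a : A i, act i a b = b')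
    (exactC : ∀ i (c : C i), v i c = ptD i ↔ ∃ b : B i, u i b = c)
    (hA : SA.MittagLeffler) (hC : SC.MittagLeffler) (hD : SD.DualMittagLeffler) :
    SB.MittagLeffler :=
  mittagLeffler_of_exact_sequence_general SA SB SC SD act act_bond u v u_bond v_bond exactB exactC
    hA hC hD
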